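/- For every x, g ∈ ℝ^n and γ > 0: ⟨g, P_γ(x, g)⟩ ≥ (1 − (γ·L_h·L_J)/2)·‖P_γ(x, g)‖² + (1/γ)·( h(c(x⁺)) − h(c(x)) ), where x⁺ = x⁺(x, g, γ). -/

import Mathlib

/-!
Write `v = x⁺ - x`. The model `u ↦ ⟪g, u - x⟫ + h (c x + J x (u - x))` is convex, and a minimizer
of a convex function plus `‖u - x‖² / (2γ)` improves on `x` by `‖v‖² / γ`, not merely
`‖v‖² / (2γ)`. Replacing the linearization `c x + J x v` by `c x⁺` costs at most
`L_h · L_J / 2 · ‖v‖²` (Lipschitz `h` and the quadratic Taylor bound for `c`); dividing by `γ`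
gives the claim with `P_γ = -v / γ`.
-/

open scoped RealInnerProductSpace
open Set Filter Topology

variable {E F : Type*} [NormedAddCommGroup E] [NormedSpace ℝ E]
  [NormedAddCommGroup F] [NormedSpace ℝ F]

theorem norm_image_sub_sub_fderiv_le_of_lipschitz {c : E → F} {J : E → E →L[ℝ] F} {L : ℝ}
    (hc : ∀ z, HasFDerivAt c (J z) z) (hJ : ∀ a b, ‖J a - J b‖ ≤ L * ‖a - b‖) (a b : E) :
    ‖c b - c a - J a (b - a)‖ ≤ L / 2 * ‖b - a‖ ^ 2 := by
  set v := b - a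
  let f : ℝ → F := fun t => c (a + t • v) - c a - t • J a v
  have hf : ∀ t, HasDerivAt f ((J (a + t • v) - J a) v) t := by
    intro t
    have hline : HasDerivAt (fun t : ℝ => a + t • v) v t := by
      simpa using ((hasDerivAt_id t).smul_const v).const_add a
    exact ((((hc _).comp_hasDerivAt t hline).sub_const (c a)).sub
      ((hasDerivAt_id t).smul_const (J a v))).congr_deriv (by simp)
  have hB : ∀ t : ℝ, HasDerivAt (fun s => L / 2 * ‖v‖ ^ 2 * s ^ 2) (L * ‖v‖ ^ 2 * t) t :=
    fun t => ((hasDerivAt_pow 2 t).const_mul (L / 2 * ‖v‖ ^ 2)).congr_deriv (by ring)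
  have hbound : ∀ t ∈ Ico (0 : ℝ) 1, ‖(J (a + t • v) - J a) v‖ ≤ L * ‖v‖ ^ 2 * t := fun t ht =>
    calc ‖(J (a + t • v) - J a) v‖ ≤ ‖J (a + t • v) - J a‖ * ‖v‖ := (J _ - J a).le_opNorm v
      _ ≤ L * ‖t • v‖ * ‖v‖ := by
        gcongr
        simpa using hJ (a + t • v) a
      _ = L * ‖v‖ ^ 2 * t := by rw [norm_smul, Real.norm_of_nonneg ht.1]; ring
  simpa [f, v] using image_norm_le_of_norm_deriv_right_le_deriv_boundary
    (fun t _ => (hf t).continuousAt.continuousWithinAt) (fun t _ => (hf t).hasDerivWithinAt)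
    (by simp [f]) hB hbound (right_mem_Icc.2 zero_le_one)

theorem ConvexOn.add_norm_sub_sq_div_le_of_forall_le {φ : E → ℝ} (hφ : ConvexOn ℝ univ φ)
    {γ : ℝ} {x z : E}
    (hz : ∀ u, φ z + ‖z - x‖ ^ 2 / (2 * γ) ≤ φ u + ‖u - x‖ ^ 2 / (2 * γ)) :
    φ z + ‖z - x‖ ^ 2 / γ ≤ φ x := by
  set D := ‖z - x‖ ^ 2 / (2 * γ)
  -- Test `z` against the points `(1 - t) • z + t • x` of the segment towards `x`, then let `t → 0`.
  have hseg : ∀ t ∈ Ioc (0 : ℝ) 1, φ z + (2 - t) * D ≤ φ x := by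
    rintro t ⟨ht0, ht1⟩
    have hcomb : (1 - t) • z + t • x - x = (1 - t) • (z - x) := by module
    have hnorm : ‖(1 - t) • (z - x)‖ ^ 2 / (2 * γ) = (1 - t) ^ 2 * D := by
      rw [norm_smul, mul_pow, Real.norm_eq_abs, sq_abs, mul_div_assoc]
    have hmin := hz ((1 - t) • z + t • x)
    rw [hcomb, hnorm] at hmin
    have hcvx := hφ.2 (mem_univ z) (mem_univ x) (sub_nonneg.2 ht1) ht0.le (sub_add_cancel 1 t)
    simp only [smul_eq_mul] at hcvx
    have : t * (φ z + (2 - t) * D) ≤ t * φ x := by nlinarith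
    exact le_of_mul_le_mul_left this ht0
  have hlim : Tendsto (fun t : ℝ => φ z + (2 - t) * D) (𝓝[>] 0) (𝓝 (φ z + (2 - 0) * D)) :=
    (Continuous.tendsto (by fun_prop) 0).mono_left nhdsWithin_le_nhds
  have hlimit := le_of_tendsto hlim (eventually_of_mem (Ioc_mem_nhdsGT zero_lt_one) hseg)
  have h2D : (2 - 0) * D = ‖z - x‖ ^ 2 / γ := by
    simp only [D]; field_simp; ring
  linarith

theorem ConvexOn.inner_sub_add_comp_linearization {H : Type*} [NormedAddCommGroup H]
    [InnerProductSpace ℝ H] {h : F → ℝ} (hh : ConvexOn ℝ univ h) (g x : H) (y : F)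
    (A : H →L[ℝ] F) : ConvexOn ℝ univ fun u => ⟪g, u - x⟫ + h (y + A (u - x)) := by
  refine ⟨convex_univ, fun u _ w _ a b ha hb hab => ?_⟩
  have hsub : a • u + b • w - x = a • (u - x) + b • (w - x) := by
    linear_combination (norm := module) hab • x
  have hlin : y + A (a • (u - x) + b • (w - x)) =
      a • (y + A (u - x)) + b • (y + A (w - x)) := by
    rw [map_add, map_smul, map_smul]
    linear_combination (norm := module) -hab • y
  have := hh.2 (mem_univ (y + A (u - x))) (mem_univ (y + A (w - x))) ha hb hab
  simp only [hsub, hlin, inner_add_right, real_inner_smul_right, smul_eq_mul] at this ⊢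
  linarith

theorem stmt_3 {n q : ℕ}
    (c : EuclideanSpace ℝ (Fin n) → EuclideanSpace ℝ (Fin q))
    (J : EuclideanSpace ℝ (Fin n) → EuclideanSpace ℝ (Fin n) →L[ℝ] EuclideanSpace ℝ (Fin q))
    (h : EuclideanSpace ℝ (Fin q) → ℝ)
    (L_J L_h : ℝ) (hLh : 0 < L_h)
    (hc : ∀ z, HasFDerivAt c (J z) z)
    (hJLip : ∀ a b, ‖J a - J b‖ ≤ L_J * ‖a - b‖)
    (hconv : ConvexOn ℝ Set.univ h)
    (hhLip : ∀ a b, |h a - h b| ≤ L_h * ‖a - b‖)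
    (x g : EuclideanSpace ℝ (Fin n)) (γ : ℝ) (hγ : 0 < γ)
    (xplus : EuclideanSpace ℝ (Fin n))
    (hmin : ∀ u, ⟪g, xplus - x⟫ + h (c x + J x (xplus - x)) + ‖xplus - x‖ ^ 2 / (2 * γ) ≤
      ⟪g, u - x⟫ + h (c x + J x (u - x)) + ‖u - x‖ ^ 2 / (2 * γ)) :
    ⟪g, γ⁻¹ • (x - xplus)⟫ ≥
      (1 - γ * L_h * L_J / 2) * ‖γ⁻¹ • (x - xplus)‖ ^ 2 +
        (1 / γ) * (h (c xplus) - h (c x)) := by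
  have hprox := ConvexOn.add_norm_sub_sq_div_le_of_forall_le
    (hconv.inner_sub_add_comp_linearization g x (c x) (J x)) hmin
  simp only [sub_self, inner_zero_right, map_zero, add_zero, zero_add] at hprox
  have hmodel : h (c xplus) ≤ h (c x + J x (xplus - x)) + L_h * (L_J / 2 * ‖xplus - x‖ ^ 2) :=
    calc h (c xplus)
        ≤ h (c x + J x (xplus - x)) + L_h * ‖c xplus - (c x + J x (xplus - x))‖ := by
          linarith [le_abs_self (h (c xplus) - h (c x + J x (xplus - x))),
            hhLip (c xplus) (c x + J x (xplus - x))]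
      _ ≤ h (c x + J x (xplus - x)) + L_h * (L_J / 2 * ‖xplus - x‖ ^ 2) := by
          rw [← sub_sub]
          gcongr
          exact norm_image_sub_sub_fderiv_le_of_lipschitz hc hJLip x xplus
  have hdecrease : ⟪g, xplus - x⟫ + (h (c xplus) - h (c x)) +
      (γ⁻¹ - L_h * L_J / 2) * ‖xplus - x‖ ^ 2 ≤ 0 := by
    rw [div_eq_inv_mul] at hprox
    linarith
  rw [← neg_sub xplus x, smul_neg, inner_neg_right, norm_neg, real_inner_smul_right, norm_smul,
    Real.norm_of_nonneg (inv_nonneg.2 hγ.le)]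
  have := mul_nonpos_of_nonneg_of_nonpos (inv_nonneg.2 hγ.le) hdecrease
  field_simp at this ⊢
  linarith
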